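/- Assume Assumption (†). Let V be a weakly saturated subvariety of ℙ^m over F, and let W₁, …, W_k ⊂ V be pairwise distinct irreducible locally closed strongly saturated subvarieties with dim W_i < dim V for all i, such that no W_i is contained in the Zariski closure of W_j for i ≠ j, and such that θ_i := lim_{B→∞} N(W_i,B)/N(V,B) satisfies 0 < θ_i < 1 for all i. Then lim_{B→∞} N(W_{i₁} ∩ ⋯ ∩ W_{i_l}, B)/N(V,B) = 0 for all pairwise distinct indices i₁, …, i_l with l ≥ 2, and consequently Σ_{i=1}^k θ_i = lim_{B→∞} N(W₁ ∪ ⋯ ∪ W_k, B)/N(V,B) < 1. -/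

import Mathlib

open Filter Topology

namespace ProjSat

/-- The set of `F`-rational points of projective `m`-space, modelled as the
projectivization of `F^(m+1)`. -/
abbrev Pt (F : Type) [Field F] (m : ℕ) := Projectivization F (Fin (m + 1) → F)

variable (F : Type) [Field F] (m : ℕ)

/-- A polynomial `p` vanishes at a point `x ∈ ℙ^m(F)` if it vanishes on every
vector representing `x`. -/
def Vanishes (p : MvPolynomial (Fin (m + 1)) F) (x : Pt F m) : Prop :=
  ∀ (v : Fin (m + 1) → F) (hv : v ≠ 0),
    Projectivization.mk F v hv = x → MvPolynomial.eval v p = 0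

/-- The Zariski topology on `ℙ^m(F)`: it is generated by the complements of the
zero loci of homogeneous polynomials. -/
instance zariskiTopology : TopologicalSpace (Pt F m) :=
  TopologicalSpace.generateFrom
    { U | ∃ (p : MvPolynomial (Fin (m + 1)) F) (d : ℕ),
        p.IsHomogeneous d ∧ U = { x | ¬ Vanishes F m p x } }

variable {F m}

/-- The dimension of a subvariety: the topological Krull dimension of the subspace. -/
noncomputable def dimv (V : Set (Pt F m)) : WithBot ℕ∞ :=
  topologicalKrullDim V

variable (H : Pt F m → ℝ)

/-- The height counting function `N(V, B) = #{x ∈ V(F) : H(x) ≤ B}`. -/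
noncomputable def Ncount (V : Set (Pt F m)) (B : ℝ) : ℕ :=
  {x ∈ V | H x ≤ B}.ncard

/-- The counting ratio `B ↦ N(V', B) / N(V, B)`. -/
noncomputable def ratio (V' V : Set (Pt F m)) : ℝ → ℝ :=
  fun B => (Ncount H V' B : ℝ) / (Ncount H V B : ℝ)

/-- Assumption (†): for all locally closed subvarieties `V' ⊆ V` of `ℙ^m` over `F`
with `V(F)` infinite, the limit `lim_{B→∞} N(V',B)/N(V,B)` exists. -/
def Dagger : Prop :=
  ∀ V' V : Set (Pt F m), IsLocallyClosed V' → IsLocallyClosed V → V' ⊆ V →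
    V.Infinite → ∃ L : ℝ, Tendsto (ratio H V' V) atTop (𝓝 L)

/-- `U` is a dense Zariski open subset of `V`. -/
def IsDenseOpenIn (U V : Set (Pt F m)) : Prop :=
  (∃ O : Set (Pt F m), IsOpen O ∧ U = V ∩ O) ∧ V ⊆ closure U

/-- `V` is weakly saturated: `V` is irreducible, `V(F)` is infinite, and for every
locally closed subvariety `W ⊆ V` with `dim W < dim V` one has
`lim_{B→∞} N(W,B)/N(V,B) < 1`. -/
def WeaklySaturated (V : Set (Pt F m)) : Prop :=
  IsIrreducible V ∧ V.Infinite ∧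
    ∀ W : Set (Pt F m), IsLocallyClosed W → W ⊆ V → dimv W < dimv V →
      ∃ L : ℝ, Tendsto (ratio H W V) atTop (𝓝 L) ∧ L < 1

/-- `V` is strongly saturated: `V` is irreducible, `V(F)` is infinite, and for every
dense Zariski open subset `U ⊆ V` one has `lim_{B→∞} N(U,B)/N(V,B) = 1`. -/
def StronglySaturated (V : Set (Pt F m)) : Prop :=
  IsIrreducible V ∧ V.Infinite ∧
    ∀ U : Set (Pt F m), IsDenseOpenIn U V →
      Tendsto (ratio H U V) atTop (𝓝 1)

end ProjSat

/-!
`W i \ closure (W j)` is a nonempty open subset of the irreducible `W i`, hence dense, so strong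
saturation gives it the whole density `θ i` and leaves density `0` for `W i ∩ W j`; by
inclusion–exclusion the union then has density `∑ θ i`. Unless `V` lies in a single
`closure (W i)` (which forces `k = 1`), the union lies in the proper closed subset
`V ∩ closure (⋃ i, W i)` of `V`. Its dimension is smaller because `ℙ^m` has finite Krull
dimension (a chain of irreducible closed sets gives a chain of homogeneous prime ideals in
`F[X₀, …, Xₘ]`), so weak saturation bounds its density, and hence `∑ θ i`, below `1`.
-/

theorem Order.krullDim_lt_of_strictMono {α β : Type*} [Preorder α] [Preorder β] {f : α → β}
    (hf : StrictMono f) {t : β} (ht : ∀ a, f a < t) (hβ : krullDim β ≠ ⊤) :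
    krullDim α < krullDim β := by
  have : FiniteDimensionalOrder β :=
    finiteDimensionalOrder_iff_krullDim_ne_bot_and_top.2 ⟨krullDim_ne_bot_iff.2 ⟨t⟩, hβ⟩
  rw [krullDim_eq_length_of_finiteDimensionalOrder (α := β), krullDim_lt_coe_iff]
  intro l
  have := ((l.map f hf).snoc t (by simpa using ht _)).length_le_length_longestOf
  rwa [RelSeries.snoc_length, LTSeries.map_length] at this

section Topology

open Set TopologicalSpace

variable {X : Type*} [TopologicalSpace X]

theorem topologicalKrullDim_inter_lt {V D : Set X} (hV : IsIrreducible V) (hD : IsClosed D)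
    (hVD : ¬ V ⊆ D) (hfin : topologicalKrullDim V ≠ ⊤) :
    topologicalKrullDim ↥(V ∩ D) < topologicalKrullDim V := by
  have : IrreducibleSpace V := Subtype.irreducibleSpace hV
  have hι := (IsEmbedding.inclusion (inter_subset_left : V ∩ D ⊆ V)).isInducing
  let top : IrreducibleCloseds V := ⟨univ, IrreducibleSpace.isIrreducible_univ V, isClosed_univ⟩
  refine Order.krullDim_lt_of_strictMono (IrreducibleCloseds.map_strictMono_of_isInducing hι)
    (t := top) (fun Z => lt_of_le_of_ne (fun _ _ => trivial) fun h => hVD fun x hx => ?_) hfin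
  have hsub : (IrreducibleCloseds.map _ hι.continuous Z : Set V) ⊆ (↑) ⁻¹' D :=
    closure_minimal (by rintro _ ⟨z, -, rfl⟩; exact z.2.2) (hD.preimage continuous_subtype_val)
  exact hsub (h ▸ trivial : (⟨x, hx⟩ : V) ∈ (IrreducibleCloseds.map _ hι.continuous Z : Set V))

theorem IsIrreducible.exists_subset_closure_of_subset_closure_iUnion {ι : Type*} [Finite ι]
    {V : Set X} (hV : IsIrreducible V) {W : ι → Set X} (h : V ⊆ closure (⋃ i, W i)) :
    ∃ i, V ⊆ closure (W i) := by
  have := Fintype.ofFinite ι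
  rw [closure_iUnion_of_finite] at h
  obtain ⟨_, hz, hVz⟩ := isIrreducible_iff_sUnion_isClosed.1 hV
    (Finset.univ.image fun i => closure (W i)) (by simp) (by simpa using h)
  obtain ⟨i, -, rfl⟩ := Finset.mem_image.1 hz
  exact ⟨i, hVz⟩

end Topology

theorem MvPolynomial.IsHomogeneous.eval_smul {σ R : Type*} [CommSemiring R]
    {p : MvPolynomial σ R} {d : ℕ} (hp : p.IsHomogeneous d) (a : R) (v : σ → R) :
    eval (a • v) p = a ^ d * eval v p := by
  classical
  conv_lhs => rw [p.as_sum]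
  conv_rhs => rw [p.as_sum]
  simp only [map_sum, Finset.mul_sum, eval_monomial]
  refine Finset.sum_congr rfl fun β hβ => ?_
  have hdeg : β.sum (fun _ e => e) = d := by
    simpa [Finsupp.weight_apply] using hp (mem_support_iff.1 hβ)
  simp only [Pi.smul_apply, smul_eq_mul, mul_pow, ← hdeg, Finsupp.prod, Finsupp.sum,
    Finset.prod_mul_distrib, Finset.prod_pow_eq_pow_sum]
  ring

namespace ProjSat

open Set MvPolynomial

variable {F : Type} [Field F] {m : ℕ}

section Zariski

theorem vanishes_iff_eval_rep {p : MvPolynomial (Fin (m + 1)) F} {d : ℕ}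
    (hp : p.IsHomogeneous d) {x : Pt F m} : Vanishes F m p x ↔ eval x.rep p = 0 := by
  refine ⟨fun h => h _ x.rep_nonzero x.mk_rep, fun h v hv hvx => ?_⟩
  rw [← x.mk_rep, Projectivization.mk_eq_mk_iff] at hvx
  obtain ⟨a, rfl⟩ := hvx
  rw [Units.smul_def, hp.eval_smul, h, mul_zero]

theorem isClosed_setOf_eval_rep_eq_zero {p : MvPolynomial (Fin (m + 1)) F} {d : ℕ}
    (hp : p.IsHomogeneous d) : IsClosed {x : Pt F m | eval x.rep p = 0} := by
  rw [← isOpen_compl_iff]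
  exact TopologicalSpace.isOpen_generateFrom_of_mem
    ⟨p, d, hp, by ext; simp [vanishes_iff_eval_rep hp]⟩

theorem exists_isHomogeneous_eval_rep_ne_zero {U : Set (Pt F m)} (hU : IsOpen U) {x : Pt F m}
    (hx : x ∈ U) : ∃ q : MvPolynomial (Fin (m + 1)) F, (∃ d, q.IsHomogeneous d) ∧
      eval x.rep q ≠ 0 ∧ ∀ y : Pt F m, eval y.rep q ≠ 0 → y ∈ U := by
  induction hU generalizing x with
  | basic U hU =>
    obtain ⟨p, d, hp, rfl⟩ := hU
    simp only [mem_ofPred_eq, vanishes_iff_eval_rep hp] at hx ⊢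
    exact ⟨p, ⟨d, hp⟩, hx, fun y hy => hy⟩
  | univ => exact ⟨1, ⟨0, isHomogeneous_one _ _⟩, by simp, fun y _ => trivial⟩
  | inter U V _ _ ihU ihV =>
    obtain ⟨p, ⟨d, hp⟩, hpx, hpU⟩ := ihU hx.1
    obtain ⟨q, ⟨e, hq⟩, hqx, hqV⟩ := ihV hx.2
    refine ⟨p * q, ⟨d + e, hp.mul hq⟩, by simp [hpx, hqx], fun y hy => ?_⟩
    rw [map_mul] at hy
    exact ⟨hpU y (left_ne_zero_of_mul hy), hqV y (right_ne_zero_of_mul hy)⟩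
  | sUnion S _ ih =>
    obtain ⟨U, hUS, hxU⟩ := hx
    obtain ⟨q, hq, hqx, hqU⟩ := ih U hUS hxU
    exact ⟨q, hq, hqx, fun y hy => ⟨U, hUS, hqU y hy⟩⟩

/-- Spanned by homogeneous polynomials only, so that primality can be tested on homogeneous
elements, whose vanishing at a point depends on a single representative. -/
noncomputable def homogeneousVanishingIdeal (C : Set (Pt F m)) :
    Ideal (MvPolynomial (Fin (m + 1)) F) :=
  Ideal.span {p | (∃ d, p.IsHomogeneous d) ∧ ∀ x ∈ C, eval x.rep p = 0}

theorem eval_rep_eq_zero_of_mem_homogeneousVanishingIdeal {C : Set (Pt F m)}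
    {p : MvPolynomial (Fin (m + 1)) F} (hp : p ∈ homogeneousVanishingIdeal C) {x : Pt F m}
    (hx : x ∈ C) : eval x.rep p = 0 :=
  Ideal.span_le (I := RingHom.ker (eval x.rep)) |>.2 (fun _ hq => hq.2 x hx) hp

attribute [local instance] MvPolynomial.gradedAlgebra in
theorem isPrime_homogeneousVanishingIdeal {C : Set (Pt F m)} (hC : IsIrreducible C) :
    (homogeneousVanishingIdeal C).IsPrime := by
  refine (Ideal.homogeneous_span (homogeneousSubmodule _ F) _ fun p hp => ?_)
    |>.isPrime_of_homogeneous_mem_or_mem (fun htop => ?_) ?_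
  · obtain ⟨⟨d, hd⟩, -⟩ := hp
    exact ⟨d, (mem_homogeneousSubmodule d p).2 hd⟩
  · obtain ⟨x, hx⟩ := hC.nonempty
    simpa using eval_rep_eq_zero_of_mem_homogeneousVanishingIdeal
      ((Ideal.eq_top_iff_one _).1 htop) hx
  · rintro p q ⟨d, hp⟩ ⟨e, hq⟩ hpq
    rw [mem_homogeneousSubmodule] at hp hq
    have hcover : C ⊆ {x | eval x.rep p = 0} ∪ {x | eval x.rep q = 0} := fun x hx =>
      mul_eq_zero.1 (by simpa using eval_rep_eq_zero_of_mem_homogeneousVanishingIdeal hpq hx)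
    rcases isPreirreducible_iff_isClosed_union_isClosed.1 hC.isPreirreducible _ _
      (isClosed_setOf_eval_rep_eq_zero hp) (isClosed_setOf_eval_rep_eq_zero hq) hcover with h | h
    · exact Or.inl (Ideal.subset_span ⟨⟨d, hp⟩, h⟩)
    · exact Or.inr (Ideal.subset_span ⟨⟨e, hq⟩, h⟩)

theorem homogeneousVanishingIdeal_lt {C C' : Set (Pt F m)} (hC : IsClosed C) (h : C < C') :
    homogeneousVanishingIdeal C' < homogeneousVanishingIdeal C := by
  refine lt_of_le_of_ne (Ideal.span_mono fun p hp => ⟨hp.1, fun x hx => hp.2 x (h.le hx)⟩) ?_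
  obtain ⟨x, hxC', hxC⟩ := exists_of_ssubset h
  obtain ⟨q, hq, hqx, hqC⟩ := exists_isHomogeneous_eval_rep_ne_zero hC.isOpen_compl hxC
  intro heq
  have hqC' : q ∈ homogeneousVanishingIdeal C' :=
    heq ▸ Ideal.subset_span ⟨hq, fun y hy => of_not_not fun hy' => hqC y hy' hy⟩
  exact hqx (eval_rep_eq_zero_of_mem_homogeneousVanishingIdeal hqC' hxC')

theorem topologicalKrullDim_le : topologicalKrullDim (Pt F m) ≤ m + 1 := by
  let f : TopologicalSpace.IrreducibleCloseds (Pt F m) →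
      (PrimeSpectrum (MvPolynomial (Fin (m + 1)) F))ᵒᵈ := fun Z =>
    OrderDual.toDual
      ⟨homogeneousVanishingIdeal Z, isPrime_homogeneousVanishingIdeal Z.isIrreducible⟩
  have hf : StrictMono f := fun Z _ h => homogeneousVanishingIdeal_lt Z.isClosed h
  calc topologicalKrullDim (Pt F m)
      ≤ Order.krullDim (PrimeSpectrum (MvPolynomial (Fin (m + 1)) F))ᵒᵈ :=
        Order.krullDim_le_of_strictMono f hf
    _ = m + 1 := by
        rw [Order.krullDim_orderDual, ← ringKrullDim,
          MvPolynomial.ringKrullDim_of_isNoetherianRing, ringKrullDim_eq_zero_of_field]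
        simp

theorem dimv_inter_lt {V D : Set (Pt F m)} (hV : IsIrreducible V) (hD : IsClosed D)
    (hVD : ¬ V ⊆ D) : dimv (V ∩ D) < dimv V :=
  topologicalKrullDim_inter_lt hV hD hVD <|
    ne_top_of_le_ne_top (WithBot.coe_lt_coe.2 (ENat.natCast_lt_top (m + 1))).ne
      ((topologicalKrullDim_subspace_le _ V).trans topologicalKrullDim_le)

end Zariski

section Counting

variable {H : Pt F m → ℝ}

theorem ratio_nonneg (S V : Set (Pt F m)) (B : ℝ) : 0 ≤ ratio H S V B :=
  div_nonneg (Nat.cast_nonneg _) (Nat.cast_nonneg _)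

theorem ratio_empty (V : Set (Pt F m)) : ratio H ∅ V = 0 := by
  ext; simp [ratio, Ncount]

theorem Ncount_biUnion_le {ι : Type*} (s : Finset ι) (S : ι → Set (Pt F m)) (B : ℝ) :
    Ncount H (⋃ i ∈ s, S i) B ≤ ∑ i ∈ s, Ncount H (S i) B := by
  have : {x ∈ ⋃ i ∈ s, S i | H x ≤ B} = ⋃ i ∈ s, {x ∈ S i | H x ≤ B} := by
    ext; simp [and_comm]
  simpa only [Ncount, this] using s.set_ncard_biUnion_le _

theorem ratio_biUnion_le {ι : Type*} (s : Finset ι) (S : ι → Set (Pt F m)) (V : Set (Pt F m))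
    (B : ℝ) : ratio H (⋃ i ∈ s, S i) V B ≤ ∑ i ∈ s, ratio H (S i) V B := by
  simp only [ratio, ← Finset.sum_div]
  exact div_le_div_of_nonneg_right (by exact_mod_cast Ncount_biUnion_le s S B)
    (Nat.cast_nonneg _)

variable (hN : ∀ B : ℝ, {x : Pt F m | H x ≤ B}.Finite)
include hN

theorem finite_setOf_height_le (S : Set (Pt F m)) (B : ℝ) : {x ∈ S | H x ≤ B}.Finite :=
  (hN B).subset fun _ hx => hx.2

theorem Ncount_mono {S T : Set (Pt F m)} (h : S ⊆ T) (B : ℝ) : Ncount H S B ≤ Ncount H T B :=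
  ncard_le_ncard (fun _ hx => ⟨h hx.1, hx.2⟩) (finite_setOf_height_le hN T B)

theorem ratio_mono {S T : Set (Pt F m)} (h : S ⊆ T) (V : Set (Pt F m)) (B : ℝ) :
    ratio H S V B ≤ ratio H T V B :=
  div_le_div_of_nonneg_right (by exact_mod_cast Ncount_mono hN h B) (Nat.cast_nonneg _)

theorem ratio_mul_ratio {S W : Set (Pt F m)} (h : S ⊆ W) (V : Set (Pt F m)) (B : ℝ) :
    ratio H S W B * ratio H W V B = ratio H S V B := by
  rcases eq_or_ne (Ncount H W B) 0 with hW | hW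
  · have hS : Ncount H S B = 0 := Nat.eq_zero_of_le_zero (hW ▸ Ncount_mono hN h B)
    simp [ratio, hS, hW]
  · simp only [ratio]
    field_simp

theorem ratio_union_add_ratio_inter (S T V : Set (Pt F m)) (B : ℝ) :
    ratio H (S ∪ T) V B + ratio H (S ∩ T) V B = ratio H S V B + ratio H T V B := by
  have hcount : Ncount H (S ∪ T) B + Ncount H (S ∩ T) B = Ncount H S B + Ncount H T B := by
    simp only [Ncount, mem_union, mem_inter_iff, sep_union, sep_inter]
    exact ncard_union_add_ncard_inter _ _ (finite_setOf_height_le hN S B)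
      (finite_setOf_height_le hN T B)
  simp only [ratio, ← add_div]
  exact_mod_cast congrArg (fun n : ℕ => (n : ℝ) / Ncount H V B) hcount

theorem tendsto_ratio_zero_of_subset {S T V : Set (Pt F m)} (h : S ⊆ T)
    (hT : Tendsto (ratio H T V) atTop (𝓝 0)) : Tendsto (ratio H S V) atTop (𝓝 0) :=
  tendsto_of_tendsto_of_tendsto_of_le_of_le tendsto_const_nhds hT (ratio_nonneg S V)
    (ratio_mono hN h V)

theorem tendsto_ratio_sdiff_zero {U W V : Set (Pt F m)} {θ : ℝ} (hUW : U ⊆ W)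
    (hU : Tendsto (ratio H U W) atTop (𝓝 1)) (hW : Tendsto (ratio H W V) atTop (𝓝 θ)) :
    Tendsto (ratio H (W \ U) V) atTop (𝓝 0) := by
  have hUV : Tendsto (ratio H U V) atTop (𝓝 θ) := by
    simpa only [one_mul, ratio_mul_ratio hN hUW] using hU.mul hW
  have hsplit : ∀ B, ratio H W V B - ratio H U V B = ratio H (W \ U) V B := fun B => by
    have := ratio_union_add_ratio_inter hN U (W \ U) V B
    rw [union_sdiff_cancel hUW, inter_sdiff_self, ratio_empty, Pi.zero_apply] at this
    linarith
  simpa using (hW.sub hUV).congr hsplit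

theorem tendsto_ratio_inter_zero {W W' V : Set (Pt F m)} {θ : ℝ} (hW : StronglySaturated H W)
    (hWW' : ¬ W ⊆ closure W') (hθ : Tendsto (ratio H W V) atTop (𝓝 θ)) :
    Tendsto (ratio H (W ∩ W') V) atTop (𝓝 0) := by
  have hdense : IsDenseOpenIn (W \ closure W') W := by
    refine ⟨⟨_, isClosed_closure.isOpen_compl, sdiff_eq _ _⟩, ?_⟩
    rw [sdiff_eq]
    exact subset_closure_inter_of_isPreirreducible_of_isOpen hW.1.isPreirreducible
      isClosed_closure.isOpen_compl (by rwa [← sdiff_eq, sdiff_nonempty])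
  exact tendsto_ratio_zero_of_subset hN (T := W \ (W \ closure W'))
    (fun x hx => ⟨hx.1, fun h => h.2 (subset_closure hx.2)⟩)
    (tendsto_ratio_sdiff_zero hN sdiff_subset (hW.2.2 _ hdense) hθ)

theorem tendsto_ratio_biUnion {ι : Type*} (s : Finset ι) {W : ι → Set (Pt F m)}
    {V : Set (Pt F m)} {θ : ι → ℝ} (hθ : ∀ i ∈ s, Tendsto (ratio H (W i) V) atTop (𝓝 (θ i)))
    (hpair : ∀ i ∈ s, ∀ j ∈ s, i ≠ j → Tendsto (ratio H (W i ∩ W j) V) atTop (𝓝 0)) :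
    Tendsto (ratio H (⋃ i ∈ s, W i) V) atTop (𝓝 (∑ i ∈ s, θ i)) := by
  classical
  induction s using Finset.induction_on with
  | empty =>
    simp only [Finset.notMem_empty, iUnion_of_empty, iUnion_empty, ratio_empty, Finset.sum_empty]
    exact tendsto_const_nhds
  | insert a s ha ih =>
    have hinter : Tendsto (ratio H (W a ∩ ⋃ i ∈ s, W i) V) atTop (𝓝 0) := by
      have hsum : Tendsto (fun B => ∑ i ∈ s, ratio H (W a ∩ W i) V B) atTop (𝓝 0) := by
        simpa using tendsto_finsetSum s fun i hi => hpair a (s.mem_insert_self a) i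
          (s.mem_insert_of_mem hi) (ne_of_mem_of_not_mem hi ha).symm
      refine tendsto_of_tendsto_of_tendsto_of_le_of_le tendsto_const_nhds hsum
        (ratio_nonneg _ V) fun B => ?_
      rw [inter_iUnion₂]
      exact ratio_biUnion_le s _ V B
    have hsplit : ∀ B, ratio H (W a) V B + ratio H (⋃ i ∈ s, W i) V B
        - ratio H (W a ∩ ⋃ i ∈ s, W i) V B = ratio H (⋃ i ∈ insert a s, W i) V B := fun B => by
      rw [Finset.set_biUnion_insert, ← ratio_union_add_ratio_inter hN]
      ring
    have hrest := ih (fun i hi => hθ i (s.mem_insert_of_mem hi))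
      fun i hi j hj => hpair i (s.mem_insert_of_mem hi) j (s.mem_insert_of_mem hj)
    rw [Finset.sum_insert ha, ← sub_zero (θ a + _)]
    exact (((hθ a (s.mem_insert_self a)).add hrest).sub hinter).congr hsplit

theorem lt_one_of_not_subset_closure {V S : Set (Pt F m)} {θ : ℝ} (hV : IsLocallyClosed V)
    (hws : WeaklySaturated H V) (hSV : S ⊆ V) (hVS : ¬ V ⊆ closure S)
    (hθ : Tendsto (ratio H S V) atTop (𝓝 θ)) : θ < 1 := by
  obtain ⟨L, hL, hL1⟩ := hws.2.2 (V ∩ closure S) (hV.inter isClosed_closure.isLocallyClosed)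
    inter_subset_left (dimv_inter_lt hws.1 isClosed_closure hVS)
  exact (le_of_tendsto_of_tendsto' hθ hL fun B =>
    ratio_mono hN (subset_inter hSV subset_closure) V B).trans_lt hL1

end Counting

end ProjSat

open ProjSat Filter Topology

theorem targets_density_sum_lt_one_general
    (F : Type) [Field F] (m : ℕ)
    (H : Pt F m → ℝ)
    (hNorthcott : ∀ B : ℝ, {x : Pt F m | H x ≤ B}.Finite)
    (V : Set (Pt F m)) (hV : IsLocallyClosed V)
    (hws : WeaklySaturated H V)
    (k : ℕ) (W : Fin k → Set (Pt F m))
    (hWsub : ∀ i, W i ⊆ V)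
    (hWss : ∀ i, StronglySaturated H (W i))
    (hnotcontained : ∀ i j, i ≠ j → ¬ (W i ⊆ closure (W j)))
    (θ : Fin k → ℝ)
    (hθ : ∀ i, Tendsto (ratio H (W i) V) atTop (𝓝 (θ i)))
    (hθ1 : ∀ i, θ i < 1) :
    (∀ (l : ℕ), 2 ≤ l → ∀ ι : Fin l → Fin k, Function.Injective ι →
        Tendsto (ratio H (⋂ j, W (ι j)) V) atTop (𝓝 0)) ∧
    Tendsto (ratio H (⋃ i, W i) V) atTop (𝓝 (∑ i, θ i)) ∧
    (∑ i, θ i) < 1 := by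
  have hpair : ∀ i j, i ≠ j → Tendsto (ratio H (W i ∩ W j) V) atTop (𝓝 0) := fun i j hij =>
    tendsto_ratio_inter_zero hNorthcott (hWss i) (hnotcontained i j hij) (hθ i)
  have hunion : Tendsto (ratio H (⋃ i, W i) V) atTop (𝓝 (∑ i, θ i)) := by
    simpa using tendsto_ratio_biUnion hNorthcott Finset.univ (fun i _ => hθ i)
      fun i _ j _ => hpair i j
  refine ⟨fun l hl ι hι => ?_, hunion, ?_⟩
  · let i₀ : Fin l := ⟨0, by omega⟩
    let i₁ : Fin l := ⟨1, by omega⟩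
    exact tendsto_ratio_zero_of_subset hNorthcott
      (Set.subset_inter (Set.iInter_subset _ i₀) (Set.iInter_subset _ i₁))
      (hpair _ _ (hι.ne (by simp [i₀, i₁, Fin.ext_iff])))
  by_cases hVD : V ⊆ closure (⋃ i, W i)
  · obtain ⟨i, hVi⟩ := hws.1.exists_subset_closure_of_subset_closure_iUnion hVD
    have honly : ∀ j, j = i := fun j => by_contra fun hji =>
      hnotcontained j i hji ((hWsub j).trans hVi)
    rw [Fintype.sum_eq_single i fun j hj => absurd (honly j) hj]
    exact hθ1 i
  · exact lt_one_of_not_subset_closure hNorthcott hV hws (Set.iUnion_subset hWsub) hVD hunion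

/-- **Finitely many targets have total density less than one.**
Assume Assumption (†).  Let `V` be a weakly saturated subvariety of `ℙ^m` over a
number field `F`, and let `W₁, …, W_k ⊂ V` be pairwise distinct irreducible locally
closed strongly saturated subvarieties with `dim Wᵢ < dim V`, such that no `Wᵢ` is
contained in the Zariski closure of `W_j` for `i ≠ j`, and such that
`θᵢ = lim N(Wᵢ,B)/N(V,B)` satisfies `0 < θᵢ < 1`.  Then for all pairwise distinct
indices `i₁, …, i_l` with `l ≥ 2` one has
`lim N(W_{i₁} ∩ ⋯ ∩ W_{i_l},B)/N(V,B) = 0`, and consequently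
`∑ θᵢ = lim N(W₁ ∪ ⋯ ∪ W_k,B)/N(V,B) < 1`. -/
theorem targets_density_sum_lt_one
    (F : Type) [Field F] [NumberField F] (m : ℕ)
    (H : Pt F m → ℝ) (hHpos : ∀ x, 0 < H x)
    (hNorthcott : ∀ B : ℝ, {x : Pt F m | H x ≤ B}.Finite)
    (hdagger : Dagger H)
    (V : Set (Pt F m)) (hV : IsLocallyClosed V)
    (hws : WeaklySaturated H V)
    (k : ℕ) (W : Fin k → Set (Pt F m))
    (hdistinct : Function.Injective W)
    (hWlc : ∀ i, IsLocallyClosed (W i))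
    (hWsub : ∀ i, W i ⊆ V)
    (hWirr : ∀ i, IsIrreducible (W i))
    (hWss : ∀ i, StronglySaturated H (W i))
    (hWdim : ∀ i, dimv (W i) < dimv V)
    (hnotcontained : ∀ i j, i ≠ j → ¬ (W i ⊆ closure (W j)))
    (θ : Fin k → ℝ)
    (hθ : ∀ i, Tendsto (ratio H (W i) V) atTop (𝓝 (θ i)))
    (hθ0 : ∀ i, 0 < θ i) (hθ1 : ∀ i, θ i < 1) :
    (∀ (l : ℕ), 2 ≤ l → ∀ ι : Fin l → Fin k, Function.Injective ι →
        Tendsto (ratio H (⋂ j, W (ι j)) V) atTop (𝓝 0)) ∧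
    Tendsto (ratio H (⋃ i, W i) V) atTop (𝓝 (∑ i, θ i)) ∧
    (∑ i, θ i) < 1 :=
  targets_density_sum_lt_one_general F m H hNorthcott V hV hws k W hWsub hWss hnotcontained θ hθ hθ1
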